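/- Let Q be an orthogonal projection on ℂ^E (where E = 2m + n, m internal edge pairs, n external edges) and define 𝔖_Q := Q^⊥ − Q and the matrix 𝔍 acting as the block matrix with blocks [[0, 1_m, 0],[1_m, 0, 0],[0,0,0_n]] (swapping the two internal blocks, annihilating the external block). Let M_sy := {(c, c, 0) : c ∈ ℂ^m} and M_asy := {(c, −c, 0) : c ∈ ℂ^m}. Then a vector w satisfies 𝔖_Q 𝔍 w = w if and only if w ∈ ((ker Q)^⊥ ∩ M_asy) ⊕ (ker Q ∩ M_sy), and 𝔖_Q 𝔍 w = −w if and only if w ∈ (ker Q ∩ M_asy) ⊕ ((ker Q)^⊥ ∩ M_sy). -/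

import Mathlib

/-! Since `𝔖_Q = 1 - 2Q` is an involution, `𝔖_Q 𝔍 w = ±w` means `𝔍 w = ±𝔖_Q w`, i.e.
`w ∓ 𝔍 w ∈ ran Q` and `w ± 𝔍 w ∈ ker Q`. These two vectors are then orthogonal; as `𝔍` is
self-adjoint and `𝔍² = P_sy + P_asy` is a projection, `⟪w - 𝔍 w, w + 𝔍 w⟫ = ‖(1 - 𝔍²) w‖²`,
so `w ∈ M_sy ⊕ M_asy`, and there `(w - 𝔍 w) / 2` and `(w + 𝔍 w) / 2` are its `M_asy`- and
`M_sy`-components. -/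

open Matrix

/-- Index type for ℂ^E with E = 2m + n. -/
abbrev GraphIdx (m n : ℕ) := Fin m ⊕ (Fin m ⊕ Fin n)

/-- The matrix 𝔍 swapping the two internal blocks and annihilating the external block. -/
def Jmat (m n : ℕ) : Matrix (GraphIdx m n) (GraphIdx m n) ℂ :=
  Matrix.of fun i j =>
    match i, j with
    | Sum.inl a, Sum.inr (Sum.inl b) => if a = b then 1 else 0
    | Sum.inr (Sum.inl a), Sum.inl b => if a = b then 1 else 0
    | _, _ => 0

/-- Membership in M_sy = {(c,c,0)}. -/
def memMsy {m n : ℕ} (w : GraphIdx m n → ℂ) : Prop :=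
  ∃ c : Fin m → ℂ, w = Sum.elim c (Sum.elim c 0)

/-- Membership in M_asy = {(c,−c,0)}. -/
def memMasy {m n : ℕ} (w : GraphIdx m n → ℂ) : Prop :=
  ∃ c : Fin m → ℂ, w = Sum.elim c (Sum.elim (-c) 0)

section Reflection

variable {ι R : Type*} [Fintype ι] [DecidableEq ι] [CommRing R] {Q : Matrix ι ι R}

theorem IsIdempotentElem.reflection_mul_self (hQ : IsIdempotentElem Q) :
    (1 - (2 : R) • Q) * (1 - (2 : R) • Q) = 1 := by
  simp only [sub_mul, mul_sub, Matrix.smul_mul, Matrix.mul_smul, hQ.eq, smul_smul, one_mul,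
    mul_one]
  module

theorem IsIdempotentElem.reflection_mulVec_eq_iff (hQ : IsIdempotentElem Q) (x y : ι → R) :
    (1 - (2 : R) • Q) *ᵥ x = y ↔ Q *ᵥ (x - y) = x - y ∧ Q *ᵥ (x + y) = 0 := by
  have hQQ : ∀ v, Q *ᵥ (Q *ᵥ v) = Q *ᵥ v := fun v => by rw [mulVec_mulVec, hQ.eq]
  simp only [sub_mulVec, one_mulVec, smul_mulVec]
  constructor
  · rintro rfl
    simp only [mulVec_add, mulVec_sub, mulVec_smul, hQQ]
    constructor <;> module
  · rintro ⟨hsub, hadd⟩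
    have h2 : (2 : R) • Q *ᵥ x = x - y := by
      rw [two_smul, ← hsub, ← sub_eq_zero, ← hadd, mulVec_sub, mulVec_add]; abel
    rw [h2]; abel

theorem mul_mulVec_eq_iff_of_mul_self_eq_one {S : Matrix ι ι R} (hS : S * S = 1)
    (J : Matrix ι ι R) (w v : ι → R) : (S * J) *ᵥ w = v ↔ J *ᵥ w = S *ᵥ v := by
  constructor
  · rintro rfl
    rw [mulVec_mulVec, ← Matrix.mul_assoc, hS, Matrix.one_mul]
  · intro h
    rw [← mulVec_mulVec, h, mulVec_mulVec, hS, one_mulVec]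

end Reflection

section Hermitian

variable {ι R 𝕜 : Type*} [Fintype ι] [CommRing R] [StarRing R]

theorem Matrix.IsHermitian.star_mulVec_dotProduct {P : Matrix ι ι R} (hP : P.IsHermitian)
    (u v : ι → R) : star (P *ᵥ u) ⬝ᵥ v = star u ⬝ᵥ (P *ᵥ v) := by
  rw [star_mulVec, hP.eq, dotProduct_mulVec]

theorem Matrix.IsHermitian.star_dotProduct_eq_zero {P : Matrix ι ι R} (hP : P.IsHermitian)
    {u v : ι → R} (hu : P *ᵥ u = u) (hv : P *ᵥ v = 0) : star u ⬝ᵥ v = 0 := by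
  rw [← hu, hP.star_mulVec_dotProduct, hv, dotProduct_zero]

open scoped ComplexOrder in
theorem Matrix.IsHermitian.mulVec_mulVec_eq_self [DecidableEq ι] [RCLike 𝕜] {J : Matrix ι ι 𝕜}
    (hJ : J.IsHermitian) (hJ3 : J * J * J = J) {w : ι → 𝕜}
    (h : star (w - J *ᵥ w) ⬝ᵥ (w + J *ᵥ w) = 0) : J *ᵥ (J *ᵥ w) = w := by
  set P : Matrix ι ι 𝕜 := 1 - J * J
  have hP : P.IsHermitian :=
    isHermitian_one.sub (by simp only [IsHermitian, conjTranspose_mul, hJ.eq])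
  have hPP : P * P = P := by
    simp only [P, sub_mul, mul_sub, Matrix.one_mul, Matrix.mul_one, ← Matrix.mul_assoc, hJ3]
    abel
  have hnorm : star (P *ᵥ w) ⬝ᵥ (P *ᵥ w) = 0 := by
    rw [hP.star_mulVec_dotProduct, mulVec_mulVec, hPP, ← h]
    simp only [P, sub_mulVec, one_mulVec, ← mulVec_mulVec, star_sub, sub_dotProduct,
      dotProduct_sub, dotProduct_add, hJ.star_mulVec_dotProduct]
    abel
  rw [dotProduct_star_self_eq_zero, sub_mulVec, one_mulVec, ← mulVec_mulVec,
    sub_eq_zero] at hnorm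
  exact hnorm.symm

end Hermitian

section EigenDecomposition

variable {ι 𝕜 : Type*} [Fintype ι] [DecidableEq ι] [RCLike 𝕜] {Q J : Matrix ι ι 𝕜}

theorem reflection_mul_mulVec_eq_self_iff (hQ : Q.IsHermitian) (hQ2 : IsIdempotentElem Q)
    (hJ : J.IsHermitian) (hJ3 : J * J * J = J) (w : ι → 𝕜) :
    ((1 - (2 : 𝕜) • Q) * J) *ᵥ w = w ↔
      ∃ a b : ι → 𝕜, (Q *ᵥ a = a ∧ J *ᵥ a = -a) ∧ (Q *ᵥ b = 0 ∧ J *ᵥ b = b) ∧ w = a + b := by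
  rw [mul_mulVec_eq_iff_of_mul_self_eq_one hQ2.reflection_mul_self, eq_comm,
    hQ2.reflection_mulVec_eq_iff]
  constructor
  · rintro ⟨hasy, hsy⟩
    have hJJ : J *ᵥ (J *ᵥ w) = w :=
      hJ.mulVec_mulVec_eq_self hJ3 (hQ.star_dotProduct_eq_zero hasy hsy)
    refine ⟨(2⁻¹ : 𝕜) • (w - J *ᵥ w), (2⁻¹ : 𝕜) • (w + J *ᵥ w),
      ⟨by rw [mulVec_smul, hasy], ?_⟩, ⟨by rw [mulVec_smul, hsy, smul_zero], ?_⟩, by module⟩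
    · rw [mulVec_smul, mulVec_sub, hJJ]; module
    · rw [mulVec_smul, mulVec_add, hJJ]; module
  · rintro ⟨a, b, ⟨hQa, hJa⟩, ⟨hQb, hJb⟩, rfl⟩
    have hasy : a + b - J *ᵥ (a + b) = (2 : 𝕜) • a := by rw [mulVec_add, hJa, hJb]; module
    have hsy : a + b + J *ᵥ (a + b) = (2 : 𝕜) • b := by rw [mulVec_add, hJa, hJb]; module
    rw [hasy, hsy, mulVec_smul, mulVec_smul, hQa, hQb, smul_zero]
    exact ⟨rfl, rfl⟩

theorem reflection_mul_mulVec_eq_neg_iff (hQ : Q.IsHermitian) (hQ2 : IsIdempotentElem Q)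
    (hJ : J.IsHermitian) (hJ3 : J * J * J = J) (w : ι → 𝕜) :
    ((1 - (2 : 𝕜) • Q) * J) *ᵥ w = -w ↔
      ∃ a b : ι → 𝕜, (Q *ᵥ a = 0 ∧ J *ᵥ a = -a) ∧ (Q *ᵥ b = b ∧ J *ᵥ b = b) ∧ w = a + b := by
  have hS : 1 - (2 : 𝕜) • (1 - Q) = -(1 - (2 : 𝕜) • Q) := by module
  have hker : ∀ v, (1 - Q) *ᵥ v = v ↔ Q *ᵥ v = 0 := fun v => by
    rw [sub_mulVec, one_mulVec, sub_eq_self]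
  have hrange : ∀ v, (1 - Q) *ᵥ v = 0 ↔ Q *ᵥ v = v := fun v => by
    rw [sub_mulVec, one_mulVec, sub_eq_zero, eq_comm]
  have h := reflection_mul_mulVec_eq_self_iff (isHermitian_one.sub hQ) hQ2.one_sub hJ hJ3 w
  rw [hS, neg_mul, neg_mulVec, neg_eq_iff_eq_neg] at h
  simpa only [hker, hrange] using h

end EigenDecomposition

section Jmat

variable {m n : ℕ}

theorem Jmat_mulVec (w : GraphIdx m n → ℂ) :
    Jmat m n *ᵥ w =
      Sum.elim (fun i => w (Sum.inr (Sum.inl i))) (Sum.elim (fun i => w (Sum.inl i)) 0) := by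
  funext i
  rcases i with a | a | a <;> simp [Jmat, mulVec, dotProduct, Fintype.sum_sum_type]

theorem Jmat_isHermitian : (Jmat m n).IsHermitian := by
  ext i j
  rcases i with a | a | a <;> rcases j with b | b | b <;> simp [Jmat, eq_comm]

theorem Jmat_mul_Jmat_mul_Jmat : Jmat m n * Jmat m n * Jmat m n = Jmat m n := by
  refine Matrix.toLin'.injective (LinearMap.ext fun w => ?_)
  simp only [Matrix.toLin'_apply, ← mulVec_mulVec, Jmat_mulVec]
  funext i
  rcases i with a | a | a <;> rfl

theorem memMsy_iff_Jmat_mulVec {w : GraphIdx m n → ℂ} : memMsy w ↔ Jmat m n *ᵥ w = w := by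
  rw [Jmat_mulVec]
  constructor
  · rintro ⟨c, rfl⟩
    funext i; rcases i with a | a | a <;> rfl
  · intro h
    refine ⟨fun i => w (Sum.inl i), funext fun i => ?_⟩
    rcases i with a | a | a
    · rfl
    · simpa using congrFun h (Sum.inl a)
    · simpa using (congrFun h (Sum.inr (Sum.inr a))).symm

theorem memMasy_iff_Jmat_mulVec {w : GraphIdx m n → ℂ} : memMasy w ↔ Jmat m n *ᵥ w = -w := by
  rw [Jmat_mulVec]
  constructor
  · rintro ⟨c, rfl⟩
    funext i; rcases i with a | a | a <;> simp
  · intro h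
    refine ⟨fun i => w (Sum.inl i), funext fun i => ?_⟩
    rcases i with a | a | a
    · rfl
    · simpa using congrFun h (Sum.inl a)
    · simpa using (congrFun h (Sum.inr (Sum.inr a))).symm

end Jmat

theorem stmt4 {m n : ℕ} (Q : Matrix (GraphIdx m n) (GraphIdx m n) ℂ)
    (hQ : Qᴴ = Q) (hQ2 : Q * Q = Q) :
    (∀ w : GraphIdx m n → ℂ,
      (((1 : Matrix (GraphIdx m n) (GraphIdx m n) ℂ) - (2 : ℂ) • Q) * Jmat m n).mulVec w = w ↔
        ∃ a b : GraphIdx m n → ℂ,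
          (Q.mulVec a = a ∧ memMasy a) ∧ (Q.mulVec b = 0 ∧ memMsy b) ∧ w = a + b) ∧
    (∀ w : GraphIdx m n → ℂ,
      (((1 : Matrix (GraphIdx m n) (GraphIdx m n) ℂ) - (2 : ℂ) • Q) * Jmat m n).mulVec w = -w ↔
        ∃ a b : GraphIdx m n → ℂ,
          (Q.mulVec a = 0 ∧ memMasy a) ∧ (Q.mulVec b = b ∧ memMsy b) ∧ w = a + b) := by
  simp only [memMasy_iff_Jmat_mulVec, memMsy_iff_Jmat_mulVec]
  exact ⟨reflection_mul_mulVec_eq_self_iff hQ hQ2 Jmat_isHermitian Jmat_mul_Jmat_mul_Jmat,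
    reflection_mul_mulVec_eq_neg_iff hQ hQ2 Jmat_isHermitian Jmat_mul_Jmat_mul_Jmat⟩
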